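/- If (𝛑̂,𝛍̂) is an MFG Nash equilibrium consistent with μ₀, then J(μ₀,𝛑̂;𝛍̂) = Σ_x μ₀(x) V(x;𝛍̂), and for every n ≥ 0 and every x ∈ X with 𝛍̂_n(x) > 0, the distribution π̂_n(·|x) is supported on argmax_{a∈A} [ r(x,a,𝛍̂_n) + γ Σ_{x'} p(x'|x,a,𝛍̂_n) V(x'; σ^{n+1}𝛍̂) ]. -/

import Mathlib

open scoped BigOperators

section MFGDefs

variable {X A : Type*} [Fintype X] [Fintype A]

/-- One-step population update `φ(μ, π)`:
`φ(μ,π)(x) = ∑_{x'} μ(x') ∑_a π(a|x') p(x|x',a,μ)`. -/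
def popStep (p : X → A → (X → ℝ) → X → ℝ) (μ : X → ℝ) (π : X → A → ℝ) : X → ℝ :=
  fun x => ∑ x' : X, μ x' * ∑ a : A, π x' a * p x' a μ x

/-- MF flow `Φ(μ₀, 𝛑)` induced by a (population-agnostic) policy from an initial MF state. -/
def mfFlow (p : X → A → (X → ℝ) → X → ℝ) (μ₀ : X → ℝ) (πs : ℕ → X → A → ℝ) : ℕ → X → ℝ
  | 0 => μ₀
  | n + 1 => popStep p (mfFlow p μ₀ πs n) (πs n)

/-- The agent's state marginals `ν`. -/
def marginals (p : X → A → (X → ℝ) → X → ℝ) (μ₀ : X → ℝ) (πs : ℕ → X → A → ℝ)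
    (μs : ℕ → X → ℝ) : ℕ → X → ℝ
  | 0 => μ₀
  | n + 1 => fun x =>
      ∑ x' : X, marginals p μ₀ πs μs n x' * ∑ a : A, πs n x' a * p x' a (μs n) x

/-- Discounted total reward `J(μ₀, 𝛑; 𝛍)`. -/
noncomputable def totalReward (p : X → A → (X → ℝ) → X → ℝ) (r : X → A → (X → ℝ) → ℝ)
    (γ : ℝ) (μ₀ : X → ℝ) (πs : ℕ → X → A → ℝ) (μs : ℕ → X → ℝ) : ℝ :=
  ∑' n : ℕ, γ ^ n * ∑ x : X, marginals p μ₀ πs μs n x * ∑ a : A, πs n x a * r x a (μs n)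

/-- A population-agnostic policy: a sequence of stationary simplex-valued policies. -/
def IsPolicy (πs : ℕ → X → A → ℝ) : Prop := ∀ n x, πs n x ∈ stdSimplex ℝ A

/-- MFG Nash equilibrium consistent with `μ₀`: the flow is the one induced by the policy,
and the policy attains the best possible total reward against this flow. -/
def IsMFGNash (p : X → A → (X → ℝ) → X → ℝ) (r : X → A → (X → ℝ) → ℝ)
    (γ : ℝ) (μ₀ : X → ℝ) (πs : ℕ → X → A → ℝ) (μs : ℕ → X → ℝ) : Prop :=
  IsPolicy πs ∧ μs = mfFlow p μ₀ πs ∧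
    ∀ πs' : ℕ → X → A → ℝ, IsPolicy πs' →
      totalReward p r γ μ₀ πs' μs ≤ totalReward p r γ μ₀ πs μs

end MFGDefs

section ValueDefs

variable {X A : Type*} [Fintype X] [Fintype A]

/-- Dirac mass at `x`. -/
def dirac [DecidableEq X] (x : X) : X → ℝ := fun x' => if x' = x then 1 else 0

/-- The value function `V(x;𝛍) = sup_{𝛑} J(δ_x,𝛑;𝛍)`. -/
noncomputable def valueFun [DecidableEq X] (p : X → A → (X → ℝ) → X → ℝ)
    (r : X → A → (X → ℝ) → ℝ) (γ : ℝ) (x : X) (μs : ℕ → X → ℝ) : ℝ :=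
  sSup {v : ℝ | ∃ πs : ℕ → X → A → ℝ, IsPolicy πs ∧ v = totalReward p r γ (dirac x) πs μs}

end ValueDefs

section Aux

set_option linter.unusedSectionVars false

variable {X A : Type*} [Fintype X] [Nonempty X] [DecidableEq X] [Fintype A] [Nonempty A]
variable (p : X → A → (X → ℝ) → X → ℝ) (r : X → A → (X → ℝ) → ℝ) {γ C : ℝ}

lemma dirac_mem (x : X) : dirac x ∈ stdSimplex ℝ X := by
  constructor
  · intro x'; dsimp [dirac]; split <;> norm_num
  · simp [dirac]

lemma uniformPol_isPolicy :
    IsPolicy (fun (_ : ℕ) (_ : X) (_ : A) => (Fintype.card A : ℝ)⁻¹) := by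
  intro n x
  constructor
  · intro a; dsimp only; positivity
  · simp only [Finset.sum_const, Finset.card_univ, nsmul_eq_mul]
    rw [mul_inv_cancel₀]
    exact_mod_cast Fintype.card_ne_zero

lemma popStep_mem (hp : ∀ x a μ, μ ∈ stdSimplex ℝ X → p x a μ ∈ stdSimplex ℝ X)
    {μ : X → ℝ} (hμ : μ ∈ stdSimplex ℝ X) {π : X → A → ℝ}
    (hπ : ∀ x, π x ∈ stdSimplex ℝ A) :
    popStep p μ π ∈ stdSimplex ℝ X := by
  constructor
  · intro x
    exact Finset.sum_nonneg fun x' _ => mul_nonneg (hμ.1 x')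
      (Finset.sum_nonneg fun a _ => mul_nonneg ((hπ x').1 a) ((hp x' a μ hμ).1 x))
  · calc ∑ x, popStep p μ π x
        = ∑ x' : X, μ x' * ∑ a : A, π x' a * ∑ x : X, p x' a μ x := by
          unfold popStep
          rw [Finset.sum_comm]
          refine Finset.sum_congr rfl fun x' _ => ?_
          rw [← Finset.mul_sum]
          congr 1
          rw [Finset.sum_comm]
          exact Finset.sum_congr rfl fun a _ => (Finset.mul_sum _ _ _).symm
      _ = 1 := by
          have h1 : ∀ x' : X, (∑ a : A, π x' a * ∑ x : X, p x' a μ x) = 1 := by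
            intro x'
            rw [Finset.sum_congr rfl fun a _ => by rw [(hp x' a μ hμ).2, mul_one]]
            exact (hπ x').2
          rw [Finset.sum_congr rfl fun x' _ => by rw [h1 x', mul_one]]
          exact hμ.2

lemma marginals_mem (hp : ∀ x a μ, μ ∈ stdSimplex ℝ X → p x a μ ∈ stdSimplex ℝ X)
    {μ₀ : X → ℝ} (hμ₀ : μ₀ ∈ stdSimplex ℝ X) {πs : ℕ → X → A → ℝ} (hπ : IsPolicy πs)
    {μs : ℕ → X → ℝ} (hμ : ∀ n, μs n ∈ stdSimplex ℝ X) (n : ℕ) :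
    marginals p μ₀ πs μs n ∈ stdSimplex ℝ X := by
  induction n with
  | zero => exact hμ₀
  | succ n ih =>
      have heq : marginals p μ₀ πs μs (n + 1)
          = popStep (fun x a _ => p x a (μs n)) (marginals p μ₀ πs μs n) (πs n) := rfl
      rw [heq]
      exact popStep_mem _ (fun x a μ' _ => hp x a (μs n) (hμ n)) ih (hπ n)

lemma mfFlow_mem (hp : ∀ x a μ, μ ∈ stdSimplex ℝ X → p x a μ ∈ stdSimplex ℝ X)
    {μ₀ : X → ℝ} (hμ₀ : μ₀ ∈ stdSimplex ℝ X) {πs : ℕ → X → A → ℝ} (hπ : IsPolicy πs)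
    (n : ℕ) : mfFlow p μ₀ πs n ∈ stdSimplex ℝ X := by
  induction n with
  | zero => exact hμ₀
  | succ n ih => exact popStep_mem p hp ih (hπ n)

/-- The marginals of the Nash policy against its own flow reproduce the flow. -/
lemma marginals_mfFlow {μ₀ : X → ℝ} {πs : ℕ → X → A → ℝ} :
    marginals p μ₀ πs (mfFlow p μ₀ πs) = mfFlow p μ₀ πs := by
  funext n
  induction n with
  | zero => rfl
  | succ n ih =>
      funext x
      show ∑ x' : X, marginals p μ₀ πs (mfFlow p μ₀ πs) n x' * _ = _
      rw [ih]
      rfl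



lemma C_nonneg (hr : ∀ x a μ, μ ∈ stdSimplex ℝ X → |r x a μ| ≤ C) : 0 ≤ C :=
  le_trans (abs_nonneg _)
    (hr (Classical.arbitrary X) (Classical.arbitrary A) _ (dirac_mem (Classical.arbitrary X)))

lemma inner_abs_le (hr : ∀ x a μ, μ ∈ stdSimplex ℝ X → |r x a μ| ≤ C)
    {ν : X → ℝ} (hν : ν ∈ stdSimplex ℝ X) {π : X → A → ℝ}
    (hπ : ∀ x, π x ∈ stdSimplex ℝ A) {μ : X → ℝ} (hμ : μ ∈ stdSimplex ℝ X) :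
    |∑ x : X, ν x * ∑ a : A, π x a * r x a μ| ≤ C := by
  calc |∑ x : X, ν x * ∑ a : A, π x a * r x a μ|
      ≤ ∑ x : X, |ν x * ∑ a : A, π x a * r x a μ| := Finset.abs_sum_le_sum_abs _ _
    _ ≤ ∑ x : X, ν x * C := by
        refine Finset.sum_le_sum fun x _ => ?_
        rw [abs_mul, abs_of_nonneg (hν.1 x)]
        refine mul_le_mul_of_nonneg_left ?_ (hν.1 x)
        calc |∑ a : A, π x a * r x a μ| ≤ ∑ a : A, |π x a * r x a μ| :=
              Finset.abs_sum_le_sum_abs _ _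
          _ ≤ ∑ a : A, π x a * C := by
              refine Finset.sum_le_sum fun a _ => ?_
              rw [abs_mul, abs_of_nonneg ((hπ x).1 a)]
              exact mul_le_mul_of_nonneg_left (hr x a μ hμ) ((hπ x).1 a)
          _ = C := by rw [← Finset.sum_mul, (hπ x).2, one_mul]
    _ = C := by rw [← Finset.sum_mul, hν.2, one_mul]

lemma summable_term (hp : ∀ x a μ, μ ∈ stdSimplex ℝ X → p x a μ ∈ stdSimplex ℝ X)
    (hr : ∀ x a μ, μ ∈ stdSimplex ℝ X → |r x a μ| ≤ C) (hγ : γ ∈ Set.Ioo (0 : ℝ) 1)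
    {μ₀ : X → ℝ} (hμ₀ : μ₀ ∈ stdSimplex ℝ X) {πs : ℕ → X → A → ℝ} (hπ : IsPolicy πs)
    {μs : ℕ → X → ℝ} (hμ : ∀ n, μs n ∈ stdSimplex ℝ X) :
    Summable (fun n : ℕ =>
      γ ^ n * ∑ x : X, marginals p μ₀ πs μs n x * ∑ a : A, πs n x a * r x a (μs n)) := by
  refine Summable.of_norm_bounded (g := fun n => γ ^ n * C)
    ((summable_geometric_of_lt_one hγ.1.le hγ.2).mul_right C) fun n => ?_
  rw [Real.norm_eq_abs, abs_mul, abs_pow, abs_of_nonneg hγ.1.le]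
  exact mul_le_mul_of_nonneg_left
    (inner_abs_le r hr (marginals_mem p hp hμ₀ hπ hμ n) (hπ n) (hμ n))
    (pow_nonneg hγ.1.le n)

lemma totalReward_abs_le (hp : ∀ x a μ, μ ∈ stdSimplex ℝ X → p x a μ ∈ stdSimplex ℝ X)
    (hr : ∀ x a μ, μ ∈ stdSimplex ℝ X → |r x a μ| ≤ C) (hγ : γ ∈ Set.Ioo (0 : ℝ) 1)
    {μ₀ : X → ℝ} (hμ₀ : μ₀ ∈ stdSimplex ℝ X) {πs : ℕ → X → A → ℝ} (hπ : IsPolicy πs)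
    {μs : ℕ → X → ℝ} (hμ : ∀ n, μs n ∈ stdSimplex ℝ X) :
    |totalReward p r γ μ₀ πs μs| ≤ C * (1 - γ)⁻¹ := by
  have hsum := summable_term p r hp hr hγ hμ₀ hπ hμ
  calc |totalReward p r γ μ₀ πs μs|
      ≤ ∑' n : ℕ, ‖γ ^ n * ∑ x : X, marginals p μ₀ πs μs n x *
          ∑ a : A, πs n x a * r x a (μs n)‖ := by
        rw [← Real.norm_eq_abs]
        exact norm_tsum_le_tsum_norm hsum.norm
    _ ≤ ∑' n : ℕ, γ ^ n * C := by
        refine Summable.tsum_le_tsum (fun n => ?_) hsum.norm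
          ((summable_geometric_of_lt_one hγ.1.le hγ.2).mul_right C)
        rw [Real.norm_eq_abs, abs_mul, abs_pow, abs_of_nonneg hγ.1.le]
        exact mul_le_mul_of_nonneg_left
          (inner_abs_le r hr (marginals_mem p hp hμ₀ hπ hμ n) (hπ n) (hμ n))
          (pow_nonneg hγ.1.le n)
    _ = C * (1 - γ)⁻¹ := by
        rw [tsum_mul_right, tsum_geometric_of_lt_one hγ.1.le hγ.2, mul_comm]

lemma marginals_eq_sum_dirac (μ₀ : X → ℝ) (πs : ℕ → X → A → ℝ) (μs : ℕ → X → ℝ)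
    (n : ℕ) (x : X) :
    marginals p μ₀ πs μs n x = ∑ x0 : X, μ₀ x0 * marginals p (dirac x0) πs μs n x := by
  induction n generalizing x with
  | zero =>
      show μ₀ x = ∑ x0 : X, μ₀ x0 * dirac x0 x
      simp [dirac, mul_ite, Finset.sum_ite_eq]
  | succ n ih =>
      show (∑ x' : X, marginals p μ₀ πs μs n x' * ∑ a : A, πs n x' a * p x' a (μs n) x) = _
      calc ∑ x' : X, marginals p μ₀ πs μs n x' * ∑ a : A, πs n x' a * p x' a (μs n) x
          = ∑ x' : X, ∑ x0 : X, μ₀ x0 * marginals p (dirac x0) πs μs n x' *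
              ∑ a : A, πs n x' a * p x' a (μs n) x := by
            refine Finset.sum_congr rfl fun x' _ => ?_
            rw [ih x', Finset.sum_mul]
        _ = ∑ x0 : X, μ₀ x0 * ∑ x' : X, marginals p (dirac x0) πs μs n x' *
              ∑ a : A, πs n x' a * p x' a (μs n) x := by
            rw [Finset.sum_comm]
            refine Finset.sum_congr rfl fun x0 _ => ?_
            rw [Finset.mul_sum]
            exact Finset.sum_congr rfl fun x' _ => (mul_assoc _ _ _)
        _ = ∑ x0 : X, μ₀ x0 * marginals p (dirac x0) πs μs (n + 1) x := rfl

lemma totalReward_eq_sum_dirac (hp : ∀ x a μ, μ ∈ stdSimplex ℝ X → p x a μ ∈ stdSimplex ℝ X)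
    (hr : ∀ x a μ, μ ∈ stdSimplex ℝ X → |r x a μ| ≤ C) (hγ : γ ∈ Set.Ioo (0 : ℝ) 1)
    (μ₀ : X → ℝ) {πs : ℕ → X → A → ℝ} (hπ : IsPolicy πs)
    {μs : ℕ → X → ℝ} (hμ : ∀ n, μs n ∈ stdSimplex ℝ X) :
    totalReward p r γ μ₀ πs μs = ∑ x0 : X, μ₀ x0 * totalReward p r γ (dirac x0) πs μs := by
  unfold totalReward
  calc ∑' n : ℕ, γ ^ n * ∑ x : X, marginals p μ₀ πs μs n x * ∑ a : A, πs n x a * r x a (μs n)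
      = ∑' n : ℕ, ∑ x0 : X, μ₀ x0 * (γ ^ n * ∑ x : X, marginals p (dirac x0) πs μs n x *
          ∑ a : A, πs n x a * r x a (μs n)) := by
        refine tsum_congr fun n => ?_
        have h : (∑ x : X, marginals p μ₀ πs μs n x * ∑ a : A, πs n x a * r x a (μs n))
            = ∑ x0 : X, μ₀ x0 * ∑ x : X, marginals p (dirac x0) πs μs n x *
                ∑ a : A, πs n x a * r x a (μs n) := by
          calc (∑ x : X, marginals p μ₀ πs μs n x * ∑ a : A, πs n x a * r x a (μs n))
              = ∑ x : X, ∑ x0 : X, μ₀ x0 * marginals p (dirac x0) πs μs n x *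
                  (∑ a : A, πs n x a * r x a (μs n)) := by
                refine Finset.sum_congr rfl fun x _ => ?_
                rw [marginals_eq_sum_dirac p μ₀ πs μs n x, Finset.sum_mul]
            _ = ∑ x0 : X, μ₀ x0 * ∑ x : X, marginals p (dirac x0) πs μs n x *
                  ∑ a : A, πs n x a * r x a (μs n) := by
                rw [Finset.sum_comm]
                refine Finset.sum_congr rfl fun x0 _ => ?_
                rw [Finset.mul_sum]
                exact Finset.sum_congr rfl fun x _ => (mul_assoc _ _ _)
        rw [h, Finset.mul_sum]
        exact Finset.sum_congr rfl fun x0 _ => by ring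
    _ = ∑ x0 : X, μ₀ x0 * ∑' n : ℕ, γ ^ n * ∑ x : X, marginals p (dirac x0) πs μs n x *
          ∑ a : A, πs n x a * r x a (μs n) := by
        rw [Summable.tsum_finsetSum fun x0 _ =>
          ((summable_term p r hp hr hγ (dirac_mem x0) hπ hμ).mul_left (μ₀ x0))]
        exact Finset.sum_congr rfl fun x0 _ => tsum_mul_left

lemma shift_comp {α : Type*} (f : ℕ → α) (n : ℕ) :
    (fun m => f (m + 1 + n)) = fun m => f (m + (n + 1)) :=
  funext fun m => congrArg f (by omega)

lemma shift_zero {α : Type*} (f : ℕ → α) : (fun m => f (m + 0)) = f :=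
  funext fun m => congrArg f (by omega)

lemma marginals_shift (μ₀ : X → ℝ) (πs : ℕ → X → A → ℝ) (μs : ℕ → X → ℝ) (n : ℕ) :
    marginals p μ₀ πs μs (n + 1)
      = marginals p (marginals p μ₀ πs μs 1) (fun m => πs (m + 1)) (fun m => μs (m + 1)) n := by
  induction n with
  | zero => rfl
  | succ n ih =>
      funext x
      show (∑ x' : X, marginals p μ₀ πs μs (n + 1) x' *
          ∑ a : A, πs (n + 1) x' a * p x' a (μs (n + 1)) x) = _
      rw [ih]
      rfl

lemma marginals_congr {πs πs' : ℕ → X → A → ℝ} (μ₀ : X → ℝ) (μs : ℕ → X → ℝ) (n : ℕ)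
    (h : ∀ m, m < n → πs m = πs' m) :
    marginals p μ₀ πs μs n = marginals p μ₀ πs' μs n := by
  induction n with
  | zero => rfl
  | succ n ih =>
      funext x
      show (∑ x' : X, marginals p μ₀ πs μs n x' *
            ∑ a : A, πs n x' a * p x' a (μs n) x)
        = ∑ x' : X, marginals p μ₀ πs' μs n x' *
            ∑ a : A, πs' n x' a * p x' a (μs n) x
      rw [ih fun m hm => h m (by omega), h n (Nat.lt_succ_self n)]

lemma totalReward_step (hp : ∀ x a μ, μ ∈ stdSimplex ℝ X → p x a μ ∈ stdSimplex ℝ X)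
    (hr : ∀ x a μ, μ ∈ stdSimplex ℝ X → |r x a μ| ≤ C) (hγ : γ ∈ Set.Ioo (0 : ℝ) 1)
    {μ₀ : X → ℝ} (hμ₀ : μ₀ ∈ stdSimplex ℝ X) {πs : ℕ → X → A → ℝ} (hπ : IsPolicy πs)
    {μs : ℕ → X → ℝ} (hμ : ∀ n, μs n ∈ stdSimplex ℝ X) :
    totalReward p r γ μ₀ πs μs
      = (∑ x : X, μ₀ x * ∑ a : A, πs 0 x a * r x a (μs 0))
        + γ * totalReward p r γ (marginals p μ₀ πs μs 1)
            (fun m => πs (m + 1)) (fun m => μs (m + 1)) := by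
  unfold totalReward
  rw [Summable.tsum_eq_zero_add (summable_term p r hp hr hγ hμ₀ hπ hμ)]
  congr 1
  · show γ ^ 0 * (∑ x : X, μ₀ x * ∑ a : A, πs 0 x a * r x a (μs 0)) = _
    rw [pow_zero, one_mul]
  · rw [← tsum_mul_left]
    refine tsum_congr fun n => ?_
    rw [marginals_shift p μ₀ πs μs n, pow_succ]
    ring

lemma totalReward_dirac_step (hp : ∀ x a μ, μ ∈ stdSimplex ℝ X → p x a μ ∈ stdSimplex ℝ X)
    (hr : ∀ x a μ, μ ∈ stdSimplex ℝ X → |r x a μ| ≤ C) (hγ : γ ∈ Set.Ioo (0 : ℝ) 1)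
    (x : X) {πs : ℕ → X → A → ℝ} (hπ : IsPolicy πs)
    {μs : ℕ → X → ℝ} (hμ : ∀ n, μs n ∈ stdSimplex ℝ X) :
    totalReward p r γ (dirac x) πs μs
      = ∑ a : A, πs 0 x a * (r x a (μs 0)
          + γ * ∑ x' : X, p x a (μs 0) x' *
              totalReward p r γ (dirac x') (fun m => πs (m + 1)) (fun m => μs (m + 1))) := by
  have hm1 : marginals p (dirac x) πs μs 1 = fun x' => ∑ a : A, πs 0 x a * p x a (μs 0) x' := by
    funext x'
    show (∑ x0 : X, dirac x x0 * ∑ a : A, πs 0 x0 a * p x0 a (μs 0) x') = _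
    simp [dirac, ite_mul, Finset.sum_ite_eq]
  have hm1s : (fun x' => ∑ a : A, πs 0 x a * p x a (μs 0) x') ∈ stdSimplex ℝ X := by
    rw [← hm1]
    exact marginals_mem p hp (dirac_mem x) hπ hμ 1
  rw [totalReward_step p r hp hr hγ (dirac_mem x) hπ hμ, hm1,
    totalReward_eq_sum_dirac p r hp hr hγ _ (fun m => hπ (m + 1)) (fun m => hμ (m + 1))]
  have hhead : (∑ x' : X, dirac x x' * ∑ a : A, πs 0 x' a * r x' a (μs 0))
      = ∑ a : A, πs 0 x a * r x a (μs 0) := by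
    simp [dirac, ite_mul, Finset.sum_ite_eq]
  rw [hhead]
  set T : X → ℝ := fun x' =>
    totalReward p r γ (dirac x') (fun m => πs (m + 1)) (fun m => μs (m + 1)) with hT
  calc (∑ a : A, πs 0 x a * r x a (μs 0))
        + γ * ∑ x' : X, (∑ a : A, πs 0 x a * p x a (μs 0) x') * T x'
      = (∑ a : A, πs 0 x a * r x a (μs 0))
        + γ * ∑ a : A, πs 0 x a * ∑ x' : X, p x a (μs 0) x' * T x' := by
        congr 1
        congr 1
        calc ∑ x' : X, (∑ a : A, πs 0 x a * p x a (μs 0) x') * T x'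
            = ∑ x' : X, ∑ a : A, πs 0 x a * (p x a (μs 0) x' * T x') := by
              refine Finset.sum_congr rfl fun x' _ => ?_
              rw [Finset.sum_mul]
              exact Finset.sum_congr rfl fun a _ => by ring
          _ = ∑ a : A, πs 0 x a * ∑ x' : X, p x a (μs 0) x' * T x' := by
              rw [Finset.sum_comm]
              exact Finset.sum_congr rfl fun a _ => (Finset.mul_sum _ _ _).symm
    _ = ∑ a : A, πs 0 x a * (r x a (μs 0) + γ * ∑ x' : X, p x a (μs 0) x' * T x') := by
        rw [Finset.mul_sum, ← Finset.sum_add_distrib]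
        refine Finset.sum_congr rfl fun a _ => ?_
        ring

lemma totalReward_decomp (hp : ∀ x a μ, μ ∈ stdSimplex ℝ X → p x a μ ∈ stdSimplex ℝ X)
    (hr : ∀ x a μ, μ ∈ stdSimplex ℝ X → |r x a μ| ≤ C) (hγ : γ ∈ Set.Ioo (0 : ℝ) 1)
    {μ₀ : X → ℝ} (hμ₀ : μ₀ ∈ stdSimplex ℝ X) {πs : ℕ → X → A → ℝ} (hπ : IsPolicy πs)
    {μs : ℕ → X → ℝ} (hμ : ∀ n, μs n ∈ stdSimplex ℝ X) (n : ℕ) :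
    totalReward p r γ μ₀ πs μs
      = (∑ m ∈ Finset.range n, γ ^ m *
            ∑ x : X, marginals p μ₀ πs μs m x * ∑ a : A, πs m x a * r x a (μs m))
        + γ ^ n * totalReward p r γ (marginals p μ₀ πs μs n)
            (fun m => πs (m + n)) (fun m => μs (m + n)) := by
  induction n with
  | zero =>
      rw [Finset.range_zero, Finset.sum_empty, pow_zero, one_mul, zero_add,
        shift_zero πs, shift_zero μs]
      rfl
  | succ n ih =>
      rw [ih, totalReward_step p r hp hr hγ (marginals_mem p hp hμ₀ hπ hμ n)
        (fun m x => hπ (m + n) x) (fun m => hμ (m + n))]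
      have h1 : marginals p (marginals p μ₀ πs μs n)
          (fun m => πs (m + n)) (fun m => μs (m + n)) 1 = marginals p μ₀ πs μs (n + 1) := by
        funext x
        show (∑ x' : X, marginals p μ₀ πs μs n x' *
            ∑ a : A, πs (0 + n) x' a * p x' a (μs (0 + n)) x) = _
        rw [Nat.zero_add]
        rfl
      have h2 : (fun m => πs (m + 1 + n)) = fun m => πs (m + (n + 1)) := shift_comp πs n
      have h3 : (fun m => μs (m + 1 + n)) = fun m => μs (m + (n + 1)) := shift_comp μs n
      rw [h1, h2, h3, Finset.sum_range_succ]
      have h4 : (∑ x : X, marginals p μ₀ πs μs n x * ∑ a : A, πs (0 + n) x a * r x a (μs (0 + n)))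
          = ∑ x : X, marginals p μ₀ πs μs n x * ∑ a : A, πs n x a * r x a (μs n) := by
        rw [Nat.zero_add]
      rw [h4, pow_succ]
      ring

lemma valueFun_bddAbove (hp : ∀ x a μ, μ ∈ stdSimplex ℝ X → p x a μ ∈ stdSimplex ℝ X)
    (hr : ∀ x a μ, μ ∈ stdSimplex ℝ X → |r x a μ| ≤ C) (hγ : γ ∈ Set.Ioo (0 : ℝ) 1)
    (x : X) {μs : ℕ → X → ℝ} (hμ : ∀ n, μs n ∈ stdSimplex ℝ X) :
    BddAbove {v : ℝ | ∃ πs : ℕ → X → A → ℝ,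
      IsPolicy πs ∧ v = totalReward p r γ (dirac x) πs μs} := by
  refine ⟨C * (1 - γ)⁻¹, fun v hv => ?_⟩
  obtain ⟨πs, hπ, rfl⟩ := hv
  exact le_trans (le_abs_self _) (totalReward_abs_le p r hp hr hγ (dirac_mem x) hπ hμ)

lemma le_valueFun (hp : ∀ x a μ, μ ∈ stdSimplex ℝ X → p x a μ ∈ stdSimplex ℝ X)
    (hr : ∀ x a μ, μ ∈ stdSimplex ℝ X → |r x a μ| ≤ C) (hγ : γ ∈ Set.Ioo (0 : ℝ) 1)
    (x : X) {πs : ℕ → X → A → ℝ} (hπ : IsPolicy πs)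
    {μs : ℕ → X → ℝ} (hμ : ∀ n, μs n ∈ stdSimplex ℝ X) :
    totalReward p r γ (dirac x) πs μs ≤ valueFun p r γ x μs :=
  le_csSup (valueFun_bddAbove p r hp hr hγ x hμ) ⟨πs, hπ, rfl⟩

lemma valueFun_le (x : X) {μs : ℕ → X → ℝ} {b : ℝ}
    (h : ∀ πs : ℕ → X → A → ℝ, IsPolicy πs → totalReward p r γ (dirac x) πs μs ≤ b) :
    valueFun p r γ x μs ≤ b :=
  csSup_le ⟨_, ⟨_, uniformPol_isPolicy, rfl⟩⟩ fun v hv => by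
    obtain ⟨πs, hπ, rfl⟩ := hv; exact h πs hπ

lemma valueFun_abs_le (hp : ∀ x a μ, μ ∈ stdSimplex ℝ X → p x a μ ∈ stdSimplex ℝ X)
    (hr : ∀ x a μ, μ ∈ stdSimplex ℝ X → |r x a μ| ≤ C) (hγ : γ ∈ Set.Ioo (0 : ℝ) 1)
    (x : X) {μs : ℕ → X → ℝ} (hμ : ∀ n, μs n ∈ stdSimplex ℝ X) :
    |valueFun p r γ x μs| ≤ C * (1 - γ)⁻¹ := by
  rw [abs_le]
  constructor
  · refine le_trans ?_ (le_valueFun p r hp hr hγ x (uniformPol_isPolicy) hμ)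
    rw [neg_le]
    exact le_trans (neg_le_abs _)
      (totalReward_abs_le p r hp hr hγ (dirac_mem x) uniformPol_isPolicy hμ)
  · exact valueFun_le p r x fun πs hπ =>
      le_trans (le_abs_self _) (totalReward_abs_le p r hp hr hγ (dirac_mem x) hπ hμ)

/-- Shifted value function `V_n(x) = V(x; σⁿ𝛍)`. -/
noncomputable def Vv (p : X → A → (X → ℝ) → X → ℝ) (r : X → A → (X → ℝ) → ℝ) (γ : ℝ)
    (μs : ℕ → X → ℝ) (n : ℕ) (x : X) : ℝ :=
  valueFun p r γ x (fun m => μs (m + n))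

/-- Shifted state-action value. -/
noncomputable def Qv (p : X → A → (X → ℝ) → X → ℝ) (r : X → A → (X → ℝ) → ℝ) (γ : ℝ)
    (μs : ℕ → X → ℝ) (n : ℕ) (x : X) (a : A) : ℝ :=
  r x a (μs n) + γ * ∑ x' : X, p x a (μs n) x' * Vv p r γ μs (n + 1) x'

/-- A maximizing action for `Qv`. -/
noncomputable def gstar (p : X → A → (X → ℝ) → X → ℝ) (r : X → A → (X → ℝ) → ℝ) (γ : ℝ)
    (μs : ℕ → X → ℝ) (n : ℕ) (x : X) : A :=
  Classical.choose ((Finset.exists_max_image Finset.univ (Qv p r γ μs n x)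
    Finset.univ_nonempty).imp (fun _ h => h.2))

lemma gstar_spec (μs : ℕ → X → ℝ) (n : ℕ) (x : X) (a : A) :
    Qv p r γ μs n x a ≤ Qv p r γ μs n x (gstar p r γ μs n x) :=
  Classical.choose_spec ((Finset.exists_max_image Finset.univ (Qv p r γ μs n x)
    Finset.univ_nonempty).imp (fun _ h => h.2)) a (Finset.mem_univ a)

open Classical in
/-- The greedy policy. -/
noncomputable def gpol (p : X → A → (X → ℝ) → X → ℝ) (r : X → A → (X → ℝ) → ℝ) (γ : ℝ)
    (μs : ℕ → X → ℝ) (n : ℕ) (x : X) (a : A) : ℝ :=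
  if a = gstar p r γ μs n x then 1 else 0

lemma gpol_isPolicy (μs : ℕ → X → ℝ) : IsPolicy (gpol p r γ μs) := by
  intro n x
  constructor
  · intro a; unfold gpol; split <;> norm_num
  · classical
    have h : (∑ a : A, gpol p r γ μs n x a)
        = ∑ a : A, (if a = gstar p r γ μs n x then (1 : ℝ) else 0) := by
      refine Finset.sum_congr rfl fun a _ => ?_
      unfold gpol
      exact if_congr Iff.rfl rfl rfl
    rw [h, Finset.sum_ite_eq' Finset.univ (gstar p r γ μs n x) (fun _ => (1 : ℝ))]
    simp

/-- Value of the greedy policy from time `n`. -/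
noncomputable def Jgv (p : X → A → (X → ℝ) → X → ℝ) (r : X → A → (X → ℝ) → ℝ) (γ : ℝ)
    (μs : ℕ → X → ℝ) (n : ℕ) (x : X) : ℝ :=
  totalReward p r γ (dirac x) (fun m => gpol p r γ μs (m + n)) (fun m => μs (m + n))

lemma sum_indicator_gstar (μs : ℕ → X → ℝ) (n : ℕ) (x : X) (h : A → ℝ) :
    (∑ a : A, gpol p r γ μs n x a * h a) = h (gstar p r γ μs n x) := by
  classical
  simp [gpol, ite_mul, Finset.sum_ite_eq]

/-- Any policy's value from `δ_x` is at most the `Qv`-average of its first action. -/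
lemma J_le_sum_Q (hp : ∀ x a μ, μ ∈ stdSimplex ℝ X → p x a μ ∈ stdSimplex ℝ X)
    (hr : ∀ x a μ, μ ∈ stdSimplex ℝ X → |r x a μ| ≤ C) (hγ : γ ∈ Set.Ioo (0 : ℝ) 1)
    {μs : ℕ → X → ℝ} (hμ : ∀ k, μs k ∈ stdSimplex ℝ X) (n : ℕ) (x : X)
    {πs : ℕ → X → A → ℝ} (hπ : IsPolicy πs) :
    totalReward p r γ (dirac x) πs (fun m => μs (m + n))
      ≤ ∑ a : A, πs 0 x a * Qv p r γ μs n x a := by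
  rw [totalReward_dirac_step p r hp hr hγ x hπ (fun m => hμ (m + n))]
  simp only [Nat.zero_add]
  rw [show (fun m => μs (m + 1 + n)) = fun m => μs (m + (n + 1)) from shift_comp μs n]
  refine Finset.sum_le_sum fun a _ => mul_le_mul_of_nonneg_left ?_ ((hπ 0 x).1 a)
  unfold Qv Vv
  refine add_le_add_right (mul_le_mul_of_nonneg_left
    (Finset.sum_le_sum fun x' _ => mul_le_mul_of_nonneg_left ?_
      ((hp x a (μs n) (hμ n)).1 x')) hγ.1.le) _
  exact le_valueFun p r hp hr hγ x' (fun m x0 => hπ (m + 1) x0) (fun m => hμ (m + (n + 1)))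

/-- A policy whose tail is the greedy policy has value exactly the `Qv`-average. -/
lemma J_eq_sum_Q (hp : ∀ x a μ, μ ∈ stdSimplex ℝ X → p x a μ ∈ stdSimplex ℝ X)
    (hr : ∀ x a μ, μ ∈ stdSimplex ℝ X → |r x a μ| ≤ C) (hγ : γ ∈ Set.Ioo (0 : ℝ) 1)
    {μs : ℕ → X → ℝ} (hμ : ∀ k, μs k ∈ stdSimplex ℝ X)
    (hVJ : ∀ k x, Vv p r γ μs k x = Jgv p r γ μs k x) (n : ℕ) (x : X)
    {πs : ℕ → X → A → ℝ} (hπ : IsPolicy πs)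
    (htail : (fun m => πs (m + 1)) = fun m => gpol p r γ μs (m + (n + 1))) :
    totalReward p r γ (dirac x) πs (fun m => μs (m + n))
      = ∑ a : A, πs 0 x a * Qv p r γ μs n x a := by
  rw [totalReward_dirac_step p r hp hr hγ x hπ (fun m => hμ (m + n))]
  simp only [Nat.zero_add]
  rw [show (fun m => μs (m + 1 + n)) = fun m => μs (m + (n + 1)) from shift_comp μs n, htail]
  have hJV : ∀ x' : X, totalReward p r γ (dirac x')
      (fun m => gpol p r γ μs (m + (n + 1))) (fun m => μs (m + (n + 1)))
      = Vv p r γ μs (n + 1) x' := fun x' => (hVJ (n + 1) x').symm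
  simp only [hJV]
  rfl

/-- Recursion for the greedy value. -/
lemma Jg_rec (hp : ∀ x a μ, μ ∈ stdSimplex ℝ X → p x a μ ∈ stdSimplex ℝ X)
    (hr : ∀ x a μ, μ ∈ stdSimplex ℝ X → |r x a μ| ≤ C) (hγ : γ ∈ Set.Ioo (0 : ℝ) 1)
    {μs : ℕ → X → ℝ} (hμ : ∀ k, μs k ∈ stdSimplex ℝ X) (n : ℕ) (x : X) :
    Jgv p r γ μs n x
      = r x (gstar p r γ μs n x) (μs n)
        + γ * ∑ x' : X, p x (gstar p r γ μs n x) (μs n) x' * Jgv p r γ μs (n + 1) x' := by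
  unfold Jgv
  rw [totalReward_dirac_step p r hp hr hγ x (fun m x0 => gpol_isPolicy p r μs (m + n) x0)
    (fun m => hμ (m + n))]
  simp only [Nat.zero_add]
  rw [show (fun m => μs (m + 1 + n)) = fun m => μs (m + (n + 1)) from shift_comp μs n,
    show (fun m => gpol p r γ μs (m + 1 + n)) = fun m => gpol p r γ μs (m + (n + 1)) from
      shift_comp _ n]
  exact sum_indicator_gstar p r μs n x _

lemma Jg_le_V (hp : ∀ x a μ, μ ∈ stdSimplex ℝ X → p x a μ ∈ stdSimplex ℝ X)
    (hr : ∀ x a μ, μ ∈ stdSimplex ℝ X → |r x a μ| ≤ C) (hγ : γ ∈ Set.Ioo (0 : ℝ) 1)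
    {μs : ℕ → X → ℝ} (hμ : ∀ k, μs k ∈ stdSimplex ℝ X) (n : ℕ) (x : X) :
    Jgv p r γ μs n x ≤ Vv p r γ μs n x :=
  le_valueFun p r hp hr hγ x (fun m x0 => gpol_isPolicy p r μs (m + n) x0)
    (fun m => hμ (m + n))

/-- Bellman upper bound for the value function. -/
lemma V_le_Qstar (hp : ∀ x a μ, μ ∈ stdSimplex ℝ X → p x a μ ∈ stdSimplex ℝ X)
    (hr : ∀ x a μ, μ ∈ stdSimplex ℝ X → |r x a μ| ≤ C) (hγ : γ ∈ Set.Ioo (0 : ℝ) 1)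
    {μs : ℕ → X → ℝ} (hμ : ∀ k, μs k ∈ stdSimplex ℝ X) (n : ℕ) (x : X) :
    Vv p r γ μs n x ≤ Qv p r γ μs n x (gstar p r γ μs n x) := by
  refine valueFun_le p r x fun πs hπ => ?_
  refine le_trans (J_le_sum_Q p r hp hr hγ hμ n x hπ) ?_
  calc ∑ a : A, πs 0 x a * Qv p r γ μs n x a
      ≤ ∑ a : A, πs 0 x a * Qv p r γ μs n x (gstar p r γ μs n x) :=
        Finset.sum_le_sum fun a _ =>
          mul_le_mul_of_nonneg_left (gstar_spec p r μs n x a) ((hπ 0 x).1 a)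
    _ = Qv p r γ μs n x (gstar p r γ μs n x) := by
        rw [← Finset.sum_mul, (hπ 0 x).2, one_mul]

/-- The value function equals the greedy value. -/
lemma V_eq_Jg (hp : ∀ x a μ, μ ∈ stdSimplex ℝ X → p x a μ ∈ stdSimplex ℝ X)
    (hr : ∀ x a μ, μ ∈ stdSimplex ℝ X → |r x a μ| ≤ C) (hγ : γ ∈ Set.Ioo (0 : ℝ) 1)
    {μs : ℕ → X → ℝ} (hμ : ∀ k, μs k ∈ stdSimplex ℝ X) (n : ℕ) (x : X) :
    Vv p r γ μs n x = Jgv p r γ μs n x := by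
  set S : Set ℝ := Set.range (fun q : ℕ × X => Vv p r γ μs q.1 q.2 - Jgv p r γ μs q.1 q.2)
    with hS
  have hSne : S.Nonempty := ⟨_, ⟨(0, x), rfl⟩⟩
  have hSbdd : BddAbove S := by
    refine ⟨2 * (C * (1 - γ)⁻¹), ?_⟩
    rintro v ⟨⟨k, y⟩, rfl⟩
    have h1 := valueFun_abs_le p r hp hr hγ y (fun m => hμ (m + k))
    have h2 : |Jgv p r γ μs k y| ≤ C * (1 - γ)⁻¹ :=
      totalReward_abs_le p r hp hr hγ (dirac_mem y)
        (fun m x0 => gpol_isPolicy p r (γ := γ) μs (m + k) x0) (fun m => hμ (m + k))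
    have h1' : Vv p r γ μs k y ≤ C * (1 - γ)⁻¹ := le_trans (le_abs_self _) h1
    show Vv p r γ μs k y - Jgv p r γ μs k y ≤ 2 * (C * (1 - γ)⁻¹)
    have := neg_abs_le (Jgv p r γ μs k y)
    linarith
  set d := sSup S with hd
  have hkey : ∀ k y, Vv p r γ μs k y - Jgv p r γ μs k y ≤ γ * d := by
    intro k y
    have h1 : Vv p r γ μs k y
        ≤ r y (gstar p r γ μs k y) (μs k)
          + γ * ∑ x' : X, p y (gstar p r γ μs k y) (μs k) x' * Vv p r γ μs (k + 1) x' :=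
      V_le_Qstar p r hp hr hγ hμ k y
    have h2 := Jg_rec p r hp hr hγ hμ k y
    have hps := hp y (gstar p r γ μs k y) (μs k) (hμ k)
    have h3 : ∑ x' : X, p y (gstar p r γ μs k y) (μs k) x' * Vv p r γ μs (k + 1) x'
        ≤ (∑ x' : X, p y (gstar p r γ μs k y) (μs k) x' * Jgv p r γ μs (k + 1) x') + d := by
      calc ∑ x' : X, p y (gstar p r γ μs k y) (μs k) x' * Vv p r γ μs (k + 1) x'
          ≤ ∑ x' : X, p y (gstar p r γ μs k y) (μs k) x' * (Jgv p r γ μs (k + 1) x' + d) := by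
            refine Finset.sum_le_sum fun x' _ => mul_le_mul_of_nonneg_left ?_ (hps.1 x')
            have hmem : Vv p r γ μs (k + 1) x' - Jgv p r γ μs (k + 1) x' ∈ S :=
              ⟨(k + 1, x'), rfl⟩
            have := le_csSup hSbdd hmem
            linarith
        _ = (∑ x' : X, p y (gstar p r γ μs k y) (μs k) x' * Jgv p r γ μs (k + 1) x') + d := by
            rw [show (∑ x' : X, p y (gstar p r γ μs k y) (μs k) x' *
                  (Jgv p r γ μs (k + 1) x' + d))
                = ∑ x' : X, (p y (gstar p r γ μs k y) (μs k) x' * Jgv p r γ μs (k + 1) x'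
                    + p y (gstar p r γ μs k y) (μs k) x' * d) from
              Finset.sum_congr rfl fun x' _ => mul_add _ _ _]
            rw [Finset.sum_add_distrib, ← Finset.sum_mul, hps.2, one_mul]
    have h4 : γ * (∑ x' : X, p y (gstar p r γ μs k y) (μs k) x' * Vv p r γ μs (k + 1) x')
        ≤ γ * ((∑ x' : X, p y (gstar p r γ μs k y) (μs k) x' * Jgv p r γ μs (k + 1) x') + d) :=
      mul_le_mul_of_nonneg_left h3 hγ.1.le
    have h5 : γ * ((∑ x' : X, p y (gstar p r γ μs k y) (μs k) x' * Jgv p r γ μs (k + 1) x') + d)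
        = γ * (∑ x' : X, p y (gstar p r γ μs k y) (μs k) x' * Jgv p r γ μs (k + 1) x')
          + γ * d := mul_add _ _ _
    linarith
  have hdγ : d ≤ γ * d := by
    refine csSup_le hSne ?_
    rintro v ⟨⟨k, y⟩, rfl⟩
    exact hkey k y
  have hd0 : d ≤ 0 := by nlinarith [hγ.2, hdγ]
  have hγd : γ * d ≤ 0 := mul_nonpos_of_nonneg_of_nonpos hγ.1.le hd0
  exact le_antisymm (by linarith [hkey n x]) (Jg_le_V p r hp hr hγ hμ n x)

/-- Bellman optimality equation. -/
lemma V_eq_Qstar (hp : ∀ x a μ, μ ∈ stdSimplex ℝ X → p x a μ ∈ stdSimplex ℝ X)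
    (hr : ∀ x a μ, μ ∈ stdSimplex ℝ X → |r x a μ| ≤ C) (hγ : γ ∈ Set.Ioo (0 : ℝ) 1)
    {μs : ℕ → X → ℝ} (hμ : ∀ k, μs k ∈ stdSimplex ℝ X) (n : ℕ) (x : X) :
    Vv p r γ μs n x = Qv p r γ μs n x (gstar p r γ μs n x) := by
  rw [V_eq_Jg p r hp hr hγ hμ n x, Jg_rec p r hp hr hγ hμ n x]
  unfold Qv
  congr 2
  refine Finset.sum_congr rfl fun x' _ => ?_
  rw [V_eq_Jg p r hp hr hγ hμ (n + 1) x']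
end Aux

/-- If `(π̂,μ̂)` is an MFG Nash equilibrium consistent with `μ₀`, then
`J(μ₀,π̂;μ̂) = ∑_x μ₀(x) V(x;μ̂)`, and for every `n ≥ 0` and every `x` with `μ̂_n(x) > 0`,
the distribution `π̂_n(·|x)` is supported on
`argmax_a [ r(x,a,μ̂_n) + γ ∑_{x'} p(x'|x,a,μ̂_n) V(x';σ^{n+1}μ̂) ]`. -/
theorem mfgNash_value_and_greedy_support
    {X A : Type*} [Fintype X] [Nonempty X] [DecidableEq X] [Fintype A] [Nonempty A]
    (p : X → A → (X → ℝ) → X → ℝ) (r : X → A → (X → ℝ) → ℝ) (γ C : ℝ)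
    (hp : ∀ x a μ, μ ∈ stdSimplex ℝ X → p x a μ ∈ stdSimplex ℝ X)
    (hr : ∀ x a μ, μ ∈ stdSimplex ℝ X → |r x a μ| ≤ C)
    (hγ : γ ∈ Set.Ioo (0 : ℝ) 1)
    (μ₀ : X → ℝ) (hμ₀ : μ₀ ∈ stdSimplex ℝ X)
    (πhat : ℕ → X → A → ℝ) (μhat : ℕ → X → ℝ)
    (hNash : IsMFGNash p r γ μ₀ πhat μhat) :
    totalReward p r γ μ₀ πhat μhat = ∑ x : X, μ₀ x * valueFun p r γ x μhat ∧
    ∀ (n : ℕ) (x : X), 0 < μhat n x → ∀ a : A, 0 < πhat n x a → ∀ a' : A,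
      r x a' (μhat n) + γ * ∑ x' : X, p x a' (μhat n) x' *
          valueFun p r γ x' (fun m => μhat (m + (n + 1)))
        ≤ r x a (μhat n) + γ * ∑ x' : X, p x a (μhat n) x' *
          valueFun p r γ x' (fun m => μhat (m + (n + 1))) := by
  classical
  obtain ⟨hπhat, hflow, hopt⟩ := hNash
  have hμh : ∀ n, μhat n ∈ stdSimplex ℝ X := fun n => by
    rw [hflow]; exact mfFlow_mem p hp hμ₀ hπhat n
  have hmarg : marginals p μ₀ πhat μhat = μhat := by
    conv_lhs => rw [hflow]
    rw [marginals_mfFlow, ← hflow]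
  have hVfold : ∀ x : X, valueFun p r γ x μhat = Vv p r γ μhat 0 x := fun x => by
    unfold Vv; rw [shift_zero μhat]
  constructor
  · -- Part 1
    have hle : totalReward p r γ μ₀ πhat μhat ≤ ∑ x : X, μ₀ x * valueFun p r γ x μhat := by
      rw [totalReward_eq_sum_dirac p r hp hr hγ μ₀ hπhat hμh]
      refine Finset.sum_le_sum fun x _ => mul_le_mul_of_nonneg_left ?_ (hμ₀.1 x)
      exact le_valueFun p r hp hr hγ x hπhat hμh
    have hge : ∑ x : X, μ₀ x * valueFun p r γ x μhat ≤ totalReward p r γ μ₀ πhat μhat := by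
      have h1 := hopt (gpol p r γ μhat) (gpol_isPolicy p r (γ := γ) μhat)
      rw [totalReward_eq_sum_dirac p r hp hr hγ μ₀ (gpol_isPolicy p r (γ := γ) μhat) hμh] at h1
      refine le_trans (le_of_eq ?_) h1
      refine Finset.sum_congr rfl fun x _ => ?_
      rw [hVfold x, V_eq_Jg p r hp hr hγ hμh 0 x]
      rfl
    exact le_antisymm hle hge
  · -- Part 2
    intro n x hx a ha a'
    by_contra hcon
    push_neg at hcon
    have hQlt : Qv p r γ μhat n x a < Qv p r γ μhat n x a' := hcon
    have hQa : Qv p r γ μhat n x a < Qv p r γ μhat n x (gstar p r γ μhat n x) :=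
      lt_of_lt_of_le hQlt (gstar_spec p r μhat n x a')
    set π' : ℕ → X → A → ℝ := fun k =>
      if k < n then πhat k
      else if k = n then
        (fun y b => if y = x then gpol p r γ μhat n x b else πhat n y b)
      else gpol p r γ μhat k with hπ'def
    have hπeq : ∀ m, m < n → π' m = πhat m := fun m hm => by
      simp only [hπ'def]; rw [if_pos hm]
    have hπ'n : π' n = fun y b => if y = x then gpol p r γ μhat n x b else πhat n y b := by
      have h1 : ¬ (n < n) := lt_irrefl n
      simp [hπ'def, h1]
    have hπ'tail : ∀ m, π' (m + 1 + n) = gpol p r γ μhat (m + 1 + n) := fun m => by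
      have h1 : ¬ (m + 1 + n < n) := by omega
      have h2 : ¬ (m + 1 + n = n) := by omega
      simp only [hπ'def]
      rw [if_neg h1, if_neg h2]
    have hπ'pol : IsPolicy π' := by
      intro k y
      rcases lt_trichotomy k n with hk | hk | hk
      · rw [hπeq k hk]; exact hπhat k y
      · subst hk; rw [hπ'n]
        by_cases hy : y = x
        · simpa [hy] using gpol_isPolicy p r (γ := γ) μhat k x
        · simpa [hy] using hπhat k y
      · have h1 : ¬ (k < n) := by omega
        have h2 : ¬ (k = n) := by omega
        have : π' k = gpol p r γ μhat k := by
          simp only [hπ'def]; rw [if_neg h1, if_neg h2]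
        rw [this]; exact gpol_isPolicy p r (γ := γ) μhat k y
    have hle2 := hopt π' hπ'pol
    have hd1 := totalReward_decomp p r hp hr hγ hμ₀ hπhat hμh n
    have hd2 := totalReward_decomp p r hp hr hγ hμ₀ hπ'pol hμh n
    have hmargeq : marginals p μ₀ π' μhat n = μhat n := by
      rw [marginals_congr p μ₀ μhat n hπeq]; exact congrFun hmarg n
    have hmargh : marginals p μ₀ πhat μhat n = μhat n := congrFun hmarg n
    have hhead : (∑ m ∈ Finset.range n, γ ^ m *
          ∑ y : X, marginals p μ₀ π' μhat m y * ∑ b : A, π' m y b * r y b (μhat m))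
        = ∑ m ∈ Finset.range n, γ ^ m *
          ∑ y : X, marginals p μ₀ πhat μhat m y * ∑ b : A, πhat m y b * r y b (μhat m) := by
      refine Finset.sum_congr rfl fun m hm => ?_
      have hmn : m < n := Finset.mem_range.mp hm
      rw [marginals_congr p μ₀ μhat m (fun j hj => hπeq j (lt_trans hj hmn)), hπeq m hmn]
    rw [hd1, hd2, hhead, hmargeq, hmargh] at hle2
    have htail1 : totalReward p r γ (μhat n) (fun m => πhat (m + n)) (fun m => μhat (m + n))
        = ∑ y : X, μhat n y *
            totalReward p r γ (dirac y) (fun m => πhat (m + n)) (fun m => μhat (m + n)) :=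
      totalReward_eq_sum_dirac p r hp hr hγ _ (fun m y => hπhat (m + n) y) (fun m => hμh (m + n))
    have htail2 : totalReward p r γ (μhat n) (fun m => π' (m + n)) (fun m => μhat (m + n))
        = ∑ y : X, μhat n y *
            totalReward p r γ (dirac y) (fun m => π' (m + n)) (fun m => μhat (m + n)) :=
      totalReward_eq_sum_dirac p r hp hr hγ _ (fun m y => hπ'pol (m + n) y) (fun m => hμh (m + n))
    rw [htail1, htail2] at hle2
    -- per-state comparison
    have hThat : ∀ y : X,
        totalReward p r γ (dirac y) (fun m => πhat (m + n)) (fun m => μhat (m + n))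
          ≤ ∑ b : A, πhat n y b * Qv p r γ μhat n y b := by
      intro y
      have h := J_le_sum_Q p r hp hr hγ hμh n y (πs := fun m => πhat (m + n))
        (fun m y0 => hπhat (m + n) y0)
      simpa using h
    have hT' : ∀ y : X,
        totalReward p r γ (dirac y) (fun m => π' (m + n)) (fun m => μhat (m + n))
          = ∑ b : A, π' n y b * Qv p r γ μhat n y b := by
      intro y
      have htl : (fun m => π' (m + 1 + n)) = fun m => gpol p r γ μhat (m + (n + 1)) := by
        funext m
        rw [hπ'tail m]
        have h3 : m + 1 + n = m + (n + 1) := by omega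
        rw [h3]
      have h := J_eq_sum_Q p r hp hr hγ hμh (fun k y0 => V_eq_Jg p r hp hr hγ hμh k y0) n y
        (πs := fun m => π' (m + n)) (fun m y0 => hπ'pol (m + n) y0) htl
      simpa using h
    have hstate : ∀ y : X,
        totalReward p r γ (dirac y) (fun m => πhat (m + n)) (fun m => μhat (m + n))
          ≤ totalReward p r γ (dirac y) (fun m => π' (m + n)) (fun m => μhat (m + n)) := by
      intro y
      rw [hT' y]
      simp only [hπ'n]
      refine le_trans (hThat y) ?_
      by_cases hy : y = x
      · subst hy
        simp only [eq_self_iff_true, if_true]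
        rw [sum_indicator_gstar p r (γ := γ) μhat n y (Qv p r γ μhat n y)]
        calc ∑ b : A, πhat n y b * Qv p r γ μhat n y b
            ≤ ∑ b : A, πhat n y b * Qv p r γ μhat n y (gstar p r γ μhat n y) :=
              Finset.sum_le_sum fun b _ =>
                mul_le_mul_of_nonneg_left (gstar_spec p r μhat n y b) ((hπhat n y).1 b)
          _ = Qv p r γ μhat n y (gstar p r γ μhat n y) := by
              rw [← Finset.sum_mul, (hπhat n y).2, one_mul]
      · simp only [if_neg hy]
        exact le_rfl
    have hstrict : totalReward p r γ (dirac x) (fun m => πhat (m + n)) (fun m => μhat (m + n))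
        < totalReward p r γ (dirac x) (fun m => π' (m + n)) (fun m => μhat (m + n)) := by
      rw [hT' x]
      simp only [hπ'n, eq_self_iff_true, if_true]
      rw [sum_indicator_gstar p r (γ := γ) μhat n x (Qv p r γ μhat n x)]
      refine lt_of_le_of_lt (hThat x) ?_
      -- convex combination with positive weight on a strictly suboptimal action
      have herase : (∑ b ∈ Finset.univ.erase a, πhat n x b * Qv p r γ μhat n x b)
            + πhat n x a * Qv p r γ μhat n x a
          = ∑ b : A, πhat n x b * Qv p r γ μhat n x b :=
        Finset.sum_erase_add _ _ (Finset.mem_univ a)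
      have heraseW : (∑ b ∈ Finset.univ.erase a, πhat n x b) + πhat n x a = 1 := by
        rw [Finset.sum_erase_add _ _ (Finset.mem_univ a)]; exact (hπhat n x).2
      have hbound : (∑ b ∈ Finset.univ.erase a, πhat n x b * Qv p r γ μhat n x b)
          ≤ (∑ b ∈ Finset.univ.erase a, πhat n x b) * Qv p r γ μhat n x (gstar p r γ μhat n x) := by
        rw [Finset.sum_mul]
        exact Finset.sum_le_sum fun b _ =>
          mul_le_mul_of_nonneg_left (gstar_spec p r μhat n x b) ((hπhat n x).1 b)
      have hmul : πhat n x a * Qv p r γ μhat n x a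
          < πhat n x a * Qv p r γ μhat n x (gstar p r γ μhat n x) :=
        mul_lt_mul_of_pos_left hQa ha
      have hW : (∑ b ∈ Finset.univ.erase a, πhat n x b) = 1 - πhat n x a := by linarith
      have hfin : (∑ b ∈ Finset.univ.erase a, πhat n x b)
            * Qv p r γ μhat n x (gstar p r γ μhat n x)
          + πhat n x a * Qv p r γ μhat n x (gstar p r γ μhat n x)
          = Qv p r γ μhat n x (gstar p r γ μhat n x) := by
        rw [hW]; ring
      linarith [herase, hbound, hmul, hfin]
    have hsumlt : (∑ y : X, μhat n y *
          totalReward p r γ (dirac y) (fun m => πhat (m + n)) (fun m => μhat (m + n)))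
        < ∑ y : X, μhat n y *
          totalReward p r γ (dirac y) (fun m => π' (m + n)) (fun m => μhat (m + n)) := by
      refine Finset.sum_lt_sum (fun y _ => mul_le_mul_of_nonneg_left (hstate y) ((hμh n).1 y))
        ⟨x, Finset.mem_univ x, mul_lt_mul_of_pos_left hstrict hx⟩
    have hpow : (0 : ℝ) < γ ^ n := pow_pos hγ.1 n
    nlinarith [hle2, hsumlt, hpow]
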